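/- In lazy Gumbel sampling using a c-approximate top-k set S with the adjusted threshold B = M - m - c (where M = max_{j in S}(x_j + G_j) and m = min_{j in S} x_j), any index j not in S with G_j < B cannot be the argmax of x_i + G_i over all i in [n]. Consequently the algorithm samples exactly from the softmax distribution p_i proportional to exp(x_i). -/

import Mathlib

open MeasureTheory ProbabilityTheory Real Finset Filter Topology

/-!
Gumbel-max trick: given `G i = t`, all other scores `x j + G j` lie below `x i + t` with
probability `∏ j ≠ i, exp (-exp (x j - x i - t))`, which is again a Gumbel CDF in `t`; integrating
it against the Gumbel density gives `exp (x i) / ∑ j, exp (x j)`.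

For `j ∉ S` the approximation property gives `x j + B ≤ max_{s ∈ S} (x s + G s)`, so an index whose
noise lies below `B` is strictly beaten by a member of `S` and can never win. Hence the lazy event
agrees with the exact argmax event except where some `G j` equals `B`, which is a null event because
`G j` is atomless and independent of the variables `G s`, `s ∈ S`, that determine `B`.
-/

-- `b = exp m` encodes the location `m`: `gumbelCDF (exp m) t = exp (-exp (-(t - m)))`.
noncomputable def gumbelCDF (b t : ℝ) : ℝ := exp (-(b * exp (-t)))

noncomputable def gumbelPDF (b t : ℝ) : ℝ := b * exp (-t) * gumbelCDF b t

noncomputable def gumbelMeasure : Measure ℝ :=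
  volume.withDensity fun t => ENNReal.ofReal (gumbelPDF 1 t)

lemma hasDerivAt_gumbelCDF (b t : ℝ) : HasDerivAt (gumbelCDF b) (gumbelPDF b t) t :=
  (((hasDerivAt_neg t).exp.const_mul b).neg.exp).congr_deriv <| by
    simp only [gumbelPDF, gumbelCDF, Pi.neg_apply]; ring

lemma gumbelPDF_nonneg {b : ℝ} (hb : 0 ≤ b) (t : ℝ) : 0 ≤ gumbelPDF b t := by
  unfold gumbelPDF gumbelCDF; positivity

lemma monotone_gumbelCDF {b : ℝ} (hb : 0 ≤ b) : Monotone (gumbelCDF b) := by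
  intro s t hst
  unfold gumbelCDF
  gcongr

lemma tendsto_gumbelCDF_atBot {b : ℝ} (hb : 0 < b) : Tendsto (gumbelCDF b) atBot (𝓝 0) :=
  tendsto_exp_atBot.comp <| tendsto_neg_atTop_atBot.comp <|
    (tendsto_exp_atTop.comp tendsto_neg_atBot_atTop).const_mul_atTop hb

lemma tendsto_gumbelCDF_atTop (b : ℝ) : Tendsto (gumbelCDF b) atTop (𝓝 1) := by
  have h : Tendsto (fun t => -(b * exp (-t))) atTop (𝓝 0) := by
    simpa using ((tendsto_exp_atBot.comp tendsto_neg_atTop_atBot).const_mul b).neg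
  rw [← exp_zero]
  exact (continuous_exp.tendsto 0).comp h

-- The image of `gumbelCDF b` lies in `[0, 1]`, so its derivative has finite integral.
lemma integrable_gumbelPDF {b : ℝ} (hb : 0 ≤ b) : Integrable (gumbelPDF b) := by
  refine ⟨by unfold gumbelPDF gumbelCDF; fun_prop, ?_⟩
  rw [hasFiniteIntegral_iff_ofReal (Eventually.of_forall (gumbelPDF_nonneg hb)),
    ← setLIntegral_univ, lintegral_deriv_eq_volume_image_of_monotoneOn MeasurableSet.univ
      (fun t _ => (hasDerivAt_gumbelCDF b t).hasDerivWithinAt)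
      ((monotone_gumbelCDF hb).monotoneOn _)]
  refine (measure_mono (t := Set.Icc 0 1) ?_).trans_lt (by simp)
  rintro _ ⟨t, -, rfl⟩
  exact ⟨(exp_pos _).le, exp_le_one_iff.2 (neg_nonpos.2 (by positivity))⟩

lemma lintegral_gumbelPDF {b : ℝ} (hb : 0 < b) :
    ∫⁻ t, ENNReal.ofReal (gumbelPDF b t) = 1 := by
  rw [← ofReal_integral_eq_lintegral_ofReal (integrable_gumbelPDF hb.le)
      (Eventually.of_forall (gumbelPDF_nonneg hb.le)),
    integral_of_hasDerivAt_of_tendsto (hasDerivAt_gumbelCDF b) (integrable_gumbelPDF hb.le)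
      (tendsto_gumbelCDF_atBot hb) (tendsto_gumbelCDF_atTop b)]
  simp

lemma gumbelMeasure_Iic (a : ℝ) :
    gumbelMeasure (Set.Iic a) = ENNReal.ofReal (gumbelCDF 1 a) := by
  rw [gumbelMeasure, withDensity_apply _ measurableSet_Iic,
    ← ofReal_integral_eq_lintegral_ofReal (integrable_gumbelPDF zero_le_one).integrableOn
      (Eventually.of_forall (gumbelPDF_nonneg zero_le_one)),
    integral_Iic_of_hasDerivAt_of_tendsto' (fun t _ => hasDerivAt_gumbelCDF 1 t)
      (integrable_gumbelPDF zero_le_one).integrableOn (tendsto_gumbelCDF_atBot one_pos),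
    sub_zero]

instance : NullSingletonClass gumbelMeasure := by
  unfold gumbelMeasure; infer_instance

instance : IsProbabilityMeasure gumbelMeasure :=
  ⟨by rw [gumbelMeasure, withDensity_apply _ MeasurableSet.univ, setLIntegral_univ,
    lintegral_gumbelPDF one_pos]⟩

lemma gumbelMeasure_Iio (a : ℝ) :
    gumbelMeasure (Set.Iio a) = ENNReal.ofReal (gumbelCDF 1 a) := by
  rw [measure_congr Iio_ae_eq_Iic, gumbelMeasure_Iic]

lemma gumbelCDF_sub (b c t : ℝ) : gumbelCDF b (t - c) = gumbelCDF (b * exp c) t := by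
  rw [gumbelCDF, gumbelCDF, neg_sub, sub_eq_neg_add, exp_add]
  ring_nf

lemma prod_gumbelCDF {ι : Type*} (s : Finset ι) (b : ι → ℝ) (t : ℝ) :
    ∏ j ∈ s, gumbelCDF (b j) t = gumbelCDF (∑ j ∈ s, b j) t := by
  simp only [gumbelCDF, ← exp_sum, sum_mul, sum_neg_distrib]

lemma lintegral_gumbelCDF_gumbelMeasure {a : ℝ} (ha : 0 ≤ a) :
    ∫⁻ t, ENNReal.ofReal (gumbelCDF a t) ∂gumbelMeasure = ENNReal.ofReal (1 + a)⁻¹ := by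
  have hb : 0 < 1 + a := by linarith
  have hdensity : ∀ t, ENNReal.ofReal (gumbelPDF 1 t) * ENNReal.ofReal (gumbelCDF a t) =
      ENNReal.ofReal (1 + a)⁻¹ * ENNReal.ofReal (gumbelPDF (1 + a) t) := fun t => by
    rw [← ENNReal.ofReal_mul (gumbelPDF_nonneg zero_le_one t),
      ← ENNReal.ofReal_mul (inv_nonneg.2 hb.le)]
    congr 1
    simp only [gumbelPDF, gumbelCDF]
    field_simp
    rw [← exp_add]
    ring_nf
  rw [gumbelMeasure, lintegral_withDensity_eq_lintegral_mul _
    (by unfold gumbelPDF gumbelCDF; fun_prop) (by unfold gumbelCDF; fun_prop)]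
  simp only [Pi.mul_apply, hdensity]
  rw [lintegral_const_mul _ (by unfold gumbelPDF gumbelCDF; fun_prop), lintegral_gumbelPDF hb,
    mul_one]

lemma map_eq_gumbelMeasure {Ω : Type*} [MeasurableSpace Ω] {μ : Measure Ω}
    [IsProbabilityMeasure μ] {X : Ω → ℝ} (hX : Measurable X)
    (hcdf : ∀ t, μ {ω | X ω ≤ t} = ENNReal.ofReal (exp (-exp (-t)))) :
    μ.map X = gumbelMeasure := by
  refine Measure.ext_of_Iic _ _ fun a => ?_
  rw [Measure.map_apply hX measurableSet_Iic, gumbelMeasure_Iic, gumbelCDF, one_mul]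
  exact hcdf a

namespace ProbabilityTheory

variable {Ω α β : Type*} [MeasurableSpace Ω] [MeasurableSpace α] [MeasurableSpace β]
  {μ : Measure Ω} [IsFiniteMeasure μ] {X : Ω → α} {Y : Ω → β}

lemma IndepFun.measure_preimage_prodMk_eq_lintegral (h : IndepFun X Y μ) (hX : Measurable X)
    (hY : Measurable Y) {U : Set (α × β)} (hU : MeasurableSet U) :
    μ ((fun ω => (X ω, Y ω)) ⁻¹' U) = ∫⁻ a, μ (Y ⁻¹' (Prod.mk a ⁻¹' U)) ∂μ.map X := by
  rw [← Measure.map_apply (hX.prodMk hY) hU,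
    (indepFun_iff_map_prod_eq_prod_map_map hX.aemeasurable hY.aemeasurable).1 h,
    Measure.prod_apply hU]
  simp_rw [Measure.map_apply hY (measurable_prodMk_left hU)]

lemma IndepFun.measure_eq_comp_eq_zero [MeasurableEq β] (h : IndepFun X Y μ)
    (hX : Measurable X) (hY : Measurable Y) [NullSingletonClass (μ.map Y)] {f : α → β}
    (hf : Measurable f) : μ {ω | Y ω = f (X ω)} = 0 := by
  have hU : MeasurableSet {p : α × β | p.2 = f p.1} :=
    measurableSet_eq_fun measurable_snd (hf.comp measurable_fst)
  change μ ((fun ω => (X ω, Y ω)) ⁻¹' {p | p.2 = f p.1}) = 0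
  rw [h.measure_preimage_prodMk_eq_lintegral hX hY hU]
  refine (lintegral_congr fun a => ?_).trans lintegral_zero
  change μ (Y ⁻¹' {f a}) = 0
  rw [← Measure.map_apply hY (measurableSet_singleton _), measure_singleton]

end ProbabilityTheory

section GumbelFamily

variable {ι Ω : Type*} [MeasurableSpace Ω] {μ : Measure Ω} {G : ι → Ω → ℝ}

lemma measure_preimage_Iio_eq_gumbelCDF {X : Ω → ℝ} (hX : Measurable X)
    (hlaw : μ.map X = gumbelMeasure) (t : ℝ) :
    μ (X ⁻¹' Set.Iio t) = ENNReal.ofReal (gumbelCDF 1 t) := by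
  rw [← Measure.map_apply hX measurableSet_Iio, hlaw, gumbelMeasure_Iio]

lemma measure_biInter_preimage_Iio_eq_gumbelCDF (hmeas : ∀ i, Measurable (G i))
    (hindep : iIndepFun G μ) (hlaw : ∀ i, μ.map (G i) = gumbelMeasure) (T : Finset ι)
    (a : ι → ℝ) (t : ℝ) :
    μ (⋂ j ∈ T, G j ⁻¹' Set.Iio (t - a j)) =
      ENNReal.ofReal (gumbelCDF (∑ j ∈ T, exp (a j)) t) := by
  rw [hindep.meas_biInter fun j _ => ⟨_, measurableSet_Iio, rfl⟩,
    prod_congr rfl fun j _ => measure_preimage_Iio_eq_gumbelCDF (hmeas j) (hlaw j) _,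
    ← ENNReal.ofReal_prod_of_nonneg (f := fun j => gumbelCDF 1 _) fun j _ => (exp_pos _).le]
  simp only [gumbelCDF_sub, one_mul, prod_gumbelCDF]

theorem measure_forall_add_lt_add_eq_softmax [Fintype ι] [DecidableEq ι]
    [IsProbabilityMeasure μ] (hmeas : ∀ i, Measurable (G i)) (hindep : iIndepFun G μ)
    (hlaw : ∀ i, μ.map (G i) = gumbelMeasure) (x : ι → ℝ) (i : ι) :
    μ {ω | ∀ j ≠ i, x j + G j ω < x i + G i ω} =
      ENNReal.ofReal (exp (x i) / ∑ j, exp (x j)) := by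
  set T := univ.erase i
  set W : Ω → T → ℝ := fun ω j => G j ω
  have hW : Measurable W := measurable_pi_lambda _ fun j => hmeas j
  have hind : IndepFun (G i) W μ :=
    (hindep.indepFun_finset {i} T (by simp [T]) hmeas).comp
      (measurable_pi_apply (⟨i, mem_singleton_self i⟩ : ({i} : Finset ι))) measurable_id
  set U := {p : ℝ × (T → ℝ) | ∀ j : T, x j + p.2 j < x i + p.1}
  have hU : MeasurableSet U := by
    simp only [U, Set.ofPred_forall]
    exact MeasurableSet.iInter fun j =>
      measurableSet_lt (measurable_const.add ((measurable_pi_apply j).comp measurable_snd))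
        (measurable_const.add measurable_fst)
  have hslice (t : ℝ) : W ⁻¹' (Prod.mk t ⁻¹' U) = ⋂ j ∈ T, G j ⁻¹' Set.Iio (t - (x j - x i)) := by
    ext ω
    simp only [U, W, Set.mem_preimage, Set.mem_ofPred_eq, Set.mem_iInter, Set.mem_Iio,
      Subtype.forall]
    exact forall₂_congr fun j _ => by constructor <;> intro h <;> linarith
  have hA : {ω | ∀ j ≠ i, x j + G j ω < x i + G i ω} = (fun ω => (G i ω, W ω)) ⁻¹' U := by
    ext ω
    simp [U, W, T]
  rw [hA, hind.measure_preimage_prodMk_eq_lintegral (hmeas i) hW hU, hlaw i]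
  simp only [hslice, measure_biInter_preimage_Iio_eq_gumbelCDF hmeas hindep hlaw]
  rw [lintegral_gumbelCDF_gumbelMeasure (by positivity), ← add_sum_erase _ _ (mem_univ i)]
  congr 1
  simp only [T, exp_sub, ← sum_div]
  field_simp

end GumbelFamily

noncomputable def lazyThreshold {ι : Type*} (S : Finset ι) (hS : S.Nonempty) (x g : ι → ℝ)
    (c : ℝ) : ℝ :=
  S.sup' hS (fun j => x j + g j) - S.inf' hS x - c

section LazyThreshold

variable {ι : Type*} {S : Finset ι} (hS : S.Nonempty) {x : ι → ℝ} {c : ℝ}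

lemma add_lazyThreshold_le_sup' (happrox : ∀ i ∉ S, ∀ j ∈ S, x i - x j ≤ c) {j : ι}
    (hj : j ∉ S) (g : ι → ℝ) :
    x j + lazyThreshold S hS x g c ≤ S.sup' hS (fun s => x s + g s) := by
  obtain ⟨s, hs, hinf⟩ := S.exists_mem_eq_inf' hS x
  have := happrox j hj s hs
  rw [lazyThreshold, hinf]
  linarith

lemma exists_mem_add_lt_of_lt_lazyThreshold (happrox : ∀ i ∉ S, ∀ j ∈ S, x i - x j ≤ c)
    {g : ι → ℝ} {j : ι} (hj : j ∉ S) (hg : g j < lazyThreshold S hS x g c) :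
    ∃ s ∈ S, x j + g j < x s + g s := by
  obtain ⟨s, hs, hsup⟩ := S.exists_mem_eq_sup' hS (fun s => x s + g s)
  have := add_lazyThreshold_le_sup' hS happrox hj g
  exact ⟨s, hs, by linarith⟩

lemma lazy_eligible_argmax_iff (happrox : ∀ i ∉ S, ∀ j ∈ S, x i - x j ≤ c) {g : ι → ℝ}
    (hties : ∀ j ∉ S, g j ≠ lazyThreshold S hS x g c) (i : ι) :
    ((i ∈ S ∨ lazyThreshold S hS x g c < g i) ∧
        ∀ j, (j ∈ S ∨ lazyThreshold S hS x g c < g j) → j ≠ i → x j + g j < x i + g i) ↔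
      ∀ j ≠ i, x j + g j < x i + g i := by
  constructor
  · rintro ⟨-, hmax⟩ j hji
    by_cases hj : j ∈ S ∨ lazyThreshold S hS x g c < g j
    · exact hmax j hj hji
    rw [not_or, not_lt] at hj
    obtain ⟨s, hs, hjs⟩ := exists_mem_add_lt_of_lt_lazyThreshold hS happrox hj.1
      (lt_of_le_of_ne hj.2 (hties j hj.1))
    rcases eq_or_ne s i with rfl | hsi
    · exact hjs
    · exact hjs.trans (hmax s (Or.inl hs) hsi)
  · refine fun hmax => ⟨?_, fun j _ hji => hmax j hji⟩
    by_contra! hi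
    obtain ⟨s, hs, hsup⟩ := S.exists_mem_eq_sup' hS (fun s => x s + g s)
    have := add_lazyThreshold_le_sup' hS happrox hi.1 g
    have := hmax s (ne_of_mem_of_not_mem hs hi.1)
    linarith [hi.2]

lemma ae_ne_lazyThreshold [Countable ι] {Ω : Type*} [MeasurableSpace Ω] {μ : Measure Ω}
    [IsFiniteMeasure μ] {G : ι → Ω → ℝ} (hmeas : ∀ i, Measurable (G i))
    (hindep : iIndepFun G μ) [∀ i, NullSingletonClass (μ.map (G i))] (x : ι → ℝ) (c : ℝ) :
    ∀ᵐ ω ∂μ, ∀ j ∉ S, G j ω ≠ lazyThreshold S hS x (fun s => G s ω) c := by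
  refine ae_all_iff.2 fun j => ?_
  by_cases hj : j ∈ S
  · exact Eventually.of_forall fun _ h => absurd hj h
  have hnull : μ {ω | G j ω = lazyThreshold S hS x (fun s => G s ω) c} = 0 := by
    refine measure_mono_null (t := ⋃ s ∈ S, {ω | G j ω = G s ω + (x s - S.inf' hS x - c)})
      (fun ω hω => ?_) ((measure_biUnion_null_iff S.countable_toSet).2 fun s hs => ?_)
    · obtain ⟨s, hs, hsup⟩ := S.exists_mem_eq_sup' hS (fun s => x s + G s ω)
      refine Set.mem_biUnion hs ?_
      simp only [Set.mem_ofPred_eq, lazyThreshold, hsup] at hω ⊢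
      linarith
    · exact (hindep.indepFun (ne_of_mem_of_not_mem hs hj)).measure_eq_comp_eq_zero (hmeas s)
        (hmeas j) (measurable_add_const _)
  filter_upwards [measure_eq_zero_iff_ae_notMem.1 hnull] with ω hω _ using hω

end LazyThreshold

theorem lazy_gumbel_adjusted_threshold_exact_general {Ω : Type*} [MeasurableSpace Ω]
    (μ : Measure Ω) [IsProbabilityMeasure μ] {n : ℕ} (x : Fin n → ℝ)
    (G : Fin n → Ω → ℝ) (hmeas : ∀ i, Measurable (G i))
    (hindep : iIndepFun G μ)
    (hcdf : ∀ i t, μ {ω | G i ω ≤ t} = ENNReal.ofReal (Real.exp (-Real.exp (-t))))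
    (c : ℝ) (S : Finset (Fin n)) (hS : S.Nonempty)
    (happrox : ∀ i ∉ S, ∀ j ∈ S, x i - x j ≤ c)
    (B : Ω → ℝ)
    (hB : ∀ ω, B ω = S.sup' hS (fun j => x j + G j ω) - S.inf' hS x - c)
    (eligible : Fin n → Ω → Prop)
    (helig : ∀ j ω, eligible j ω ↔ (j ∈ S ∨ B ω < G j ω)) :
    (∀ ω, ∀ j ∉ S, G j ω < B ω → ∃ i ∈ S, x j + G j ω < x i + G i ω) ∧
    ∀ i : Fin n,
      μ {ω | eligible i ω ∧
          ∀ j, eligible j ω → j ≠ i → x j + G j ω < x i + G i ω} =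
        ENNReal.ofReal (Real.exp (x i) / ∑ j, Real.exp (x j)) := by
  replace hB : ∀ ω, B ω = lazyThreshold S hS x (fun j => G j ω) c := hB
  refine ⟨fun ω j hj hlt =>
    exists_mem_add_lt_of_lt_lazyThreshold hS happrox (g := fun j => G j ω) hj (hB ω ▸ hlt),
    fun i => ?_⟩
  have hlaw i : μ.map (G i) = gumbelMeasure := map_eq_gumbelMeasure (hmeas i) (hcdf i)
  have (i : Fin n) : NullSingletonClass (μ.map (G i)) := hlaw i ▸ inferInstance
  rw [← measure_forall_add_lt_add_eq_softmax hmeas hindep hlaw x i]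
  refine measure_congr (eventuallyEq_set.2 ?_)
  filter_upwards [ae_ne_lazyThreshold hS hmeas hindep x c] with ω hties
  simp only [helig, hB ω]
  exact lazy_eligible_argmax_iff hS happrox hties i

/-- Lazy Gumbel sampling with a `c`-approximate top-`k` set `S` and the adjusted
threshold `B = max_{j∈S}(x j + G j) - min_{j∈S} x j - c`: any index `j ∉ S` whose noise
is below `B` cannot attain the argmax of `x i + G i`, and consequently the algorithm
samples exactly from the softmax distribution `p i ∝ exp (x i)`. -/
theorem lazy_gumbel_adjusted_threshold_exact {Ω : Type*} [MeasurableSpace Ω]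
    (μ : Measure Ω) [IsProbabilityMeasure μ] {n : ℕ} (x : Fin n → ℝ)
    (G : Fin n → Ω → ℝ) (hmeas : ∀ i, Measurable (G i))
    (hindep : iIndepFun G μ)
    (hcdf : ∀ i t, μ {ω | G i ω ≤ t} = ENNReal.ofReal (Real.exp (-Real.exp (-t))))
    (k : ℕ) (c : ℝ) (hc : 0 ≤ c) (S : Finset (Fin n)) (hS : S.Nonempty)
    (hScard : S.card = k)
    (happrox : ∀ i ∉ S, ∀ j ∈ S, x i - x j ≤ c)
    (B : Ω → ℝ)
    (hB : ∀ ω, B ω = S.sup' hS (fun j => x j + G j ω) - S.inf' hS x - c)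
    (eligible : Fin n → Ω → Prop)
    (helig : ∀ j ω, eligible j ω ↔ (j ∈ S ∨ B ω < G j ω)) :
    (∀ ω, ∀ j ∉ S, G j ω < B ω → ∃ i ∈ S, x j + G j ω < x i + G i ω) ∧
    ∀ i : Fin n,
      μ {ω | eligible i ω ∧
          ∀ j, eligible j ω → j ≠ i → x j + G j ω < x i + G i ω} =
        ENNReal.ofReal (Real.exp (x i) / ∑ j, Real.exp (x j)) :=
  lazy_gumbel_adjusted_threshold_exact_general μ x G hmeas hindep hcdf c S hS happrox B hB eligible
    helig
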